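/- If {F} ∪ 𝓡 is a skolemized set of nonmonotonic existential rules (where F is viewed as a rule with empty body), then the skolem-stable sets of (F,𝓡) are in bijection with the stable models of the corresponding logic program. -/
import Mathlib


/-! ## Terms with function (skolem) symbols, atoms, nonmonotonic rules -/

/-- Terms: variables, constants, or functional (skolem) terms. -/
inductive FTerm where
  | var : ℕ → FTerm
  | const : ℕ → FTerm
  | func : ℕ → List FTerm → FTerm

mutual
  /-- The list of variables of a term. -/
  def FTerm.varList : FTerm → List ℕ
    | .var v => [v]
    | .const _ => []
    | .func _ ts => FTerm.varLists ts
  def FTerm.varLists : List FTerm → List ℕ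
    | [] => []
    | t :: ts => FTerm.varList t ++ FTerm.varLists ts
end

/-- A ground term: it contains no variable. -/
def FTerm.Ground (t : FTerm) : Prop := t.varList = []

/-- An atom over such terms. -/
structure FAtom where
  pred : ℕ
  args : List FTerm

def FAtom.varList (a : FAtom) : List ℕ := FTerm.varLists a.args

/-- A ground atom. -/
def FAtom.Ground (a : FAtom) : Prop := a.varList = []

/-- The set of variables of a list of atoms. -/
def varsOfL (A : List FAtom) : Set ℕ := {v | ∃ a ∈ A, v ∈ a.varList}

mutual
  /-- Application of a substitution to a term. -/
  def FSubst.app (σ : ℕ → FTerm) : FTerm → FTerm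
    | .var v => σ v
    | .const c => .const c
    | .func f ts => .func f (FSubst.appList σ ts)
  def FSubst.appList (σ : ℕ → FTerm) : List FTerm → List FTerm
    | [] => []
    | t :: ts => FSubst.app σ t :: FSubst.appList σ ts
end

def FSubst.atom (σ : ℕ → FTerm) (a : FAtom) : FAtom := ⟨a.pred, a.args.map (FSubst.app σ)⟩

def FSubst.set (σ : ℕ → FTerm) (A : Set FAtom) : Set FAtom := FSubst.atom σ '' A

def listToSetF (l : List FAtom) : Set FAtom := {a | a ∈ l}

/-- A nonmonotonic existential rule `B⁺, not B₁⁻, …, not B_k⁻ → H`. -/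
structure NMERule where
  pbody : List FAtom
  nbodies : List (List FAtom)
  head : List FAtom

/-- A skolemized rule: every variable of the head occurs in the positive body (the
existential variables having been replaced by functional skolem terms). -/
def NMERule.Skolemized (R : NMERule) : Prop := varsOfL R.head ⊆ varsOfL R.pbody

/-- Safeness: the variables of each negative body occur in the positive body. -/
def NMERule.Safe (R : NMERule) : Prop := ∀ B ∈ R.nbodies, varsOfL B ⊆ varsOfL R.pbody

/-! ## The nonmonotonic skolem chase and skolem-stable sets -/

/-- A nonmonotonic skolem-chase derivation from `F` (the oblivious chase on skolemized
rules performs no simplification): at each step, the positive part of a rule of `𝓡` is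
applied via a homomorphism, or nothing happens. -/
structure SkDeriv (𝓡 : Set NMERule) (F : Set FAtom) where
  st : ℕ → Set FAtom
  app : ℕ → Option (NMERule × (ℕ → FTerm))
  init : st 0 = F
  step : ∀ i, match app i with
    | some (R, π) => R ∈ 𝓡 ∧ FSubst.set π (listToSetF R.pbody) ⊆ st i ∧
        st (i + 1) = st i ∪ FSubst.set π (listToSetF R.head)
    | none => st (i + 1) = st i

/-- The atomset produced by a skolem-chase derivation. -/
def SkDeriv.produced {𝓡 F} (D : SkDeriv 𝓡 F) : Set FAtom := ⋃ i, D.st i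

/-- The derivation is sound: no application is blocked, i.e. no instantiated negative body
of an applied rule is contained in the produced atomset. -/
def SkDeriv.Sound {𝓡 F} (D : SkDeriv 𝓡 F) : Prop :=
  ∀ i R π, D.app i = some (R, π) →
    ∀ B ∈ R.nbodies, ¬ (FSubst.set π (listToSetF B) ⊆ D.produced)

/-- The derivation is complete: any further applicable rule application is either blocked
or would not change the produced atomset. -/
def SkDeriv.Complete {𝓡 F} (D : SkDeriv 𝓡 F) : Prop :=
  ∀ R ∈ 𝓡, ∀ π : ℕ → FTerm, FSubst.set π (listToSetF R.pbody) ⊆ D.produced →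
    (∃ B ∈ R.nbodies, FSubst.set π (listToSetF B) ⊆ D.produced) ∨
    FSubst.set π (listToSetF R.head) ⊆ D.produced

/-- `A` is a skolem-stable set for `(F,𝓡)`: it is produced by a complete sound
nonmonotonic skolem-chase derivation from `F`. -/
def IsSkolemStable (𝓡 : Set NMERule) (F A : Set FAtom) : Prop :=
  ∃ D : SkDeriv 𝓡 F, D.Sound ∧ D.Complete ∧ D.produced = A

/-! ## Stable models via the Gelfond–Lifschitz reduct of the grounding -/

/-- A grounding substitution. -/
def GroundSubst (σ : ℕ → FTerm) : Prop := ∀ v, (σ v).Ground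

/-- `X` contains `F` and is closed under the Gelfond–Lifschitz reduct of the grounding of
`𝓡` with respect to the candidate set `M`. -/
def ReductClosed (𝓡 : Set NMERule) (F M X : Set FAtom) : Prop :=
  F ⊆ X ∧
  ∀ R ∈ 𝓡, ∀ σ : ℕ → FTerm, GroundSubst σ →
    (∀ B ∈ R.nbodies, ¬ (FSubst.set σ (listToSetF B) ⊆ M)) →
    FSubst.set σ (listToSetF R.pbody) ⊆ X → FSubst.set σ (listToSetF R.head) ⊆ X

/-- `M` is a stable model of the logic program `{F} ∪ 𝓡`: it is the least model of the
Gelfond–Lifschitz reduct of the grounding of the program with respect to `M`. -/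
def IsStableModel (𝓡 : Set NMERule) (F M : Set FAtom) : Prop :=
  (∀ a ∈ M, a.Ground) ∧ ReductClosed 𝓡 F M M ∧ ∀ X, ReductClosed 𝓡 F M X → M ⊆ X


/-! ## Auxiliary lemmas -/

open Classical

theorem FSubst.appList_eq_map (σ : ℕ → FTerm) : ∀ ts : List FTerm,
    FSubst.appList σ ts = ts.map (FSubst.app σ)
  | [] => rfl
  | t :: ts => by rw [FSubst.appList, List.map_cons, FSubst.appList_eq_map σ ts]

mutual
theorem varList_app (σ : ℕ → FTerm) : ∀ t : FTerm,
    (FSubst.app σ t).varList = t.varList.flatMap (fun v => (σ v).varList)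
  | .var v => by simp [FSubst.app, FTerm.varList]
  | .const c => by simp [FSubst.app, FTerm.varList]
  | .func f ts => by
      simp only [FSubst.app, FTerm.varList]
      exact varLists_appList σ ts
theorem varLists_appList (σ : ℕ → FTerm) : ∀ ts : List FTerm,
    FTerm.varLists (FSubst.appList σ ts) = (FTerm.varLists ts).flatMap (fun v => (σ v).varList)
  | [] => by simp [FSubst.appList, FTerm.varLists]
  | t :: ts => by
      simp only [FSubst.appList, FTerm.varLists, List.flatMap_append]
      rw [varList_app σ t, varLists_appList σ ts]
end

mutual
theorem app_congr (σ σ' : ℕ → FTerm) : ∀ t : FTerm, (∀ v ∈ t.varList, σ v = σ' v) →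
    FSubst.app σ t = FSubst.app σ' t
  | .var v, h => by
      simp only [FSubst.app]
      exact h v (by simp [FTerm.varList])
  | .const c, _ => rfl
  | .func f ts, h => by
      simp only [FSubst.app]
      rw [appList_congr σ σ' ts (fun v hv => h v (by simpa [FTerm.varList] using hv))]
theorem appList_congr (σ σ' : ℕ → FTerm) : ∀ ts : List FTerm,
    (∀ v ∈ FTerm.varLists ts, σ v = σ' v) → FSubst.appList σ ts = FSubst.appList σ' ts
  | [], _ => rfl
  | t :: ts, h => by
      simp only [FSubst.appList]
      rw [app_congr σ σ' t (fun v hv => h v (by simp [FTerm.varLists, hv])),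
          appList_congr σ σ' ts (fun v hv => h v (by simp [FTerm.varLists, hv]))]
end

theorem atom_varList (σ : ℕ → FTerm) (a : FAtom) :
    (FSubst.atom σ a).varList = a.varList.flatMap (fun v => (σ v).varList) := by
  show FTerm.varLists (a.args.map (FSubst.app σ)) = _
  rw [← FSubst.appList_eq_map, varLists_appList]
  rfl

theorem atom_ground_iff (σ : ℕ → FTerm) (a : FAtom) :
    (FSubst.atom σ a).Ground ↔ ∀ v ∈ a.varList, (σ v).Ground := by
  simp [FAtom.Ground, atom_varList, List.flatMap_eq_nil_iff, FTerm.Ground]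

theorem atom_congr {σ σ' : ℕ → FTerm} {a : FAtom} (h : ∀ v ∈ a.varList, σ v = σ' v) :
    FSubst.atom σ a = FSubst.atom σ' a := by
  show FAtom.mk a.pred _ = FAtom.mk a.pred _
  rw [← FSubst.appList_eq_map, ← FSubst.appList_eq_map, appList_congr σ σ' a.args h]

theorem mem_varsOfL {v : ℕ} {L : List FAtom} : v ∈ varsOfL L ↔ ∃ a ∈ L, v ∈ a.varList :=
  Iff.rfl

theorem set_congr {σ σ' : ℕ → FTerm} {L : List FAtom} (h : ∀ v ∈ varsOfL L, σ v = σ' v) :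
    FSubst.set σ (listToSetF L) = FSubst.set σ' (listToSetF L) :=
  Set.image_congr fun a ha => atom_congr fun v hv => h v ⟨a, ha, hv⟩

theorem set_ground_of {σ : ℕ → FTerm} {L : List FAtom} (h : ∀ v ∈ varsOfL L, (σ v).Ground) :
    ∀ b ∈ FSubst.set σ (listToSetF L), b.Ground := by
  rintro b ⟨a, ha, rfl⟩
  rw [atom_ground_iff]
  exact fun v hv => h v ⟨a, ha, hv⟩

theorem ground_of_set_subset {σ : ℕ → FTerm} {L : List FAtom} {G : Set FAtom}
    (hG : ∀ b ∈ G, b.Ground) (h : FSubst.set σ (listToSetF L) ⊆ G) :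
    ∀ v ∈ varsOfL L, (σ v).Ground := by
  rintro v ⟨a, ha, hv⟩
  have := hG _ (h (Set.mem_image_of_mem _ ha))
  exact (atom_ground_iff σ a).1 this v hv

/-! ## Derivation lemmas -/

theorem SkDeriv.st_mono {𝓡 F} (D : SkDeriv 𝓡 F) : ∀ i j, i ≤ j → D.st i ⊆ D.st j := by
  intro i j h
  induction j, h using Nat.le_induction with
  | base => exact subset_rfl
  | succ j hj ih =>
    have hs := D.step j
    cases hA : D.app j with
    | none => rw [hA] at hs; exact ih.trans (le_of_eq hs.symm)
    | some p =>
      obtain ⟨R, π⟩ := p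
      rw [hA] at hs
      exact ih.trans (hs.2.2 ▸ Set.subset_union_left)

theorem SkDeriv.st_subset_produced {𝓡 F} (D : SkDeriv 𝓡 F) (i : ℕ) :
    D.st i ⊆ D.produced :=
  Set.subset_iUnion D.st i

theorem exists_st_of_subset {𝓡 F} (D : SkDeriv 𝓡 F) (σ : ℕ → FTerm) :
    ∀ l : List FAtom, FSubst.set σ (listToSetF l) ⊆ D.produced →
    ∃ i, FSubst.set σ (listToSetF l) ⊆ D.st i := by
  intro l
  induction l with
  | nil =>
    intro _
    exact ⟨0, by rintro b ⟨a, ha, rfl⟩; simp [listToSetF] at ha⟩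
  | cons a l ih =>
    intro h
    have h1 : FSubst.atom σ a ∈ D.produced :=
      h (Set.mem_image_of_mem _ (by simp [listToSetF]))
    obtain ⟨i1, hi1⟩ := Set.mem_iUnion.mp h1
    obtain ⟨i2, hi2⟩ := ih (fun b hb => by
      rcases hb with ⟨x, hx, rfl⟩
      exact h (Set.mem_image_of_mem _ (by
        simp only [listToSetF, Set.mem_setOf_eq, List.mem_cons] at hx ⊢
        exact Or.inr hx)))
    refine ⟨max i1 i2, ?_⟩
    rintro b ⟨x, hx, rfl⟩
    rcases (by simpa [listToSetF] using hx : x = a ∨ x ∈ l) with rfl | hx'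
    · exact D.st_mono _ _ (le_max_left _ _) hi1
    · exact D.st_mono _ _ (le_max_right _ _) (hi2 (Set.mem_image_of_mem _ hx'))

theorem st_ground {𝓡 F} (D : SkDeriv 𝓡 F) (hsk : ∀ R ∈ 𝓡, R.Skolemized)
    (hFg : ∀ a ∈ F, a.Ground) : ∀ i, ∀ b ∈ D.st i, b.Ground := by
  intro i
  induction i with
  | zero => rw [D.init]; exact hFg
  | succ i ih =>
    have hs := D.step i
    cases hA : D.app i with
    | none => rw [hA] at hs; rw [hs]; exact ih
    | some p =>
      obtain ⟨R, π⟩ := p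
      rw [hA] at hs
      obtain ⟨hR, hpb, hst⟩ := hs
      rw [hst]
      rintro b (hb | hb)
      · exact ih b hb
      · have hg : ∀ v ∈ varsOfL R.pbody, (π v).Ground := ground_of_set_subset ih hpb
        exact set_ground_of (fun v hv => hg v (hsk R hR hv)) b hb

theorem produced_ground {𝓡 F} (D : SkDeriv 𝓡 F) (hsk : ∀ R ∈ 𝓡, R.Skolemized)
    (hFg : ∀ a ∈ F, a.Ground) : ∀ b ∈ D.produced, b.Ground := by
  intro b hb
  obtain ⟨i, hi⟩ := Set.mem_iUnion.mp hb
  exact st_ground D hsk hFg i b hi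

/-! ## Countability -/

mutual
def FTerm.enc : FTerm → ℕ
  | .var v => Nat.pair 0 v
  | .const c => Nat.pair 1 c
  | .func f ts => Nat.pair 2 (Nat.pair f (FTerm.encL ts))
def FTerm.encL : List FTerm → ℕ
  | [] => 0
  | t :: ts => Nat.pair (FTerm.enc t) (FTerm.encL ts) + 1
end

mutual
theorem FTerm.enc_inj : ∀ t t' : FTerm, FTerm.enc t = FTerm.enc t' → t = t'
  | .var v, .var v', h => by
      simp only [FTerm.enc, Nat.pair_eq_pair] at h; rw [h.2]
  | .var v, .const c, h => by simp [FTerm.enc, Nat.pair_eq_pair] at h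
  | .var v, .func f ts, h => by simp [FTerm.enc, Nat.pair_eq_pair] at h
  | .const c, .var v, h => by simp [FTerm.enc, Nat.pair_eq_pair] at h
  | .const c, .const c', h => by
      simp only [FTerm.enc, Nat.pair_eq_pair] at h; rw [h.2]
  | .const c, .func f ts, h => by simp [FTerm.enc, Nat.pair_eq_pair] at h
  | .func f ts, .var v, h => by simp [FTerm.enc, Nat.pair_eq_pair] at h
  | .func f ts, .const c, h => by simp [FTerm.enc, Nat.pair_eq_pair] at h
  | .func f ts, .func f' ts', h => by
      simp only [FTerm.enc, Nat.pair_eq_pair] at h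
      rw [h.2.1, FTerm.encL_inj ts ts' h.2.2]
theorem FTerm.encL_inj : ∀ l l' : List FTerm, FTerm.encL l = FTerm.encL l' → l = l'
  | [], [], _ => rfl
  | [], t :: ts, h => by simp [FTerm.encL] at h
  | t :: ts, [], h => by simp [FTerm.encL] at h
  | t :: ts, t' :: ts', h => by
      simp only [FTerm.encL, add_left_inj, Nat.pair_eq_pair] at h
      rw [FTerm.enc_inj t t' h.1, FTerm.encL_inj ts ts' h.2]
end

instance : Countable FTerm :=
  Function.Injective.countable (f := FTerm.enc) (fun a b h => FTerm.enc_inj a b h)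

instance : Countable FAtom :=
  Function.Injective.countable (f := fun a : FAtom => (a.pred, a.args))
    (by intro a b h; cases a; cases b; simp_all)

instance : Countable NMERule :=
  Function.Injective.countable (f := fun R : NMERule => (R.pbody, R.nbodies, R.head))
    (by intro a b h; cases a; cases b; simp_all)

/-! ## Normalized substitutions -/

/-- The list of variables of the positive body of a rule. -/
def NMERule.vlist (R : NMERule) : List ℕ := R.pbody.flatMap FAtom.varList

theorem mem_vlist {v : ℕ} {R : NMERule} : v ∈ R.vlist ↔ v ∈ varsOfL R.pbody := by
  simp [NMERule.vlist, varsOfL, List.mem_flatMap]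

/-- Normalization of a substitution: trivial outside the positive-body variables. -/
def normSub (R : NMERule) (σ : ℕ → FTerm) : ℕ → FTerm :=
  fun v => if v ∈ R.vlist then σ v else .const 0

theorem normSub_agree {R : NMERule} {σ : ℕ → FTerm} :
    ∀ v ∈ varsOfL R.pbody, normSub R σ v = σ v :=
  fun v hv => if_pos (mem_vlist.mpr hv)

theorem normSub_ground {R : NMERule} {σ : ℕ → FTerm}
    (h : ∀ v ∈ varsOfL R.pbody, (σ v).Ground) : GroundSubst (normSub R σ) := by
  intro v
  by_cases hv : v ∈ R.vlist
  · simp only [normSub, if_pos hv]; exact h v (mem_vlist.mp hv)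
  · simp only [normSub, if_neg hv]; rfl

/-! ## Direction 1: skolem-stable implies stable -/

theorem stable_of_skstable {𝓡 : Set NMERule} {F A : Set FAtom}
    (hsk : ∀ R ∈ 𝓡, R.Skolemized) (hsafe : ∀ R ∈ 𝓡, R.Safe)
    (hFg : ∀ a ∈ F, a.Ground) (h : IsSkolemStable 𝓡 F A) : IsStableModel 𝓡 F A := by
  obtain ⟨D, hS, hC, rfl⟩ := h
  have hstg := st_ground D hsk hFg
  have hg := produced_ground D hsk hFg
  refine ⟨hg, ⟨?_, ?_⟩, ?_⟩
  · exact fun a ha => D.st_subset_produced 0 (show a ∈ D.st 0 from D.init.symm ▸ ha)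
  · intro R hR σ hgs hneg hpb
    rcases hC R hR σ hpb with ⟨B, hB, hBs⟩ | hh
    · exact absurd hBs (hneg B hB)
    · exact hh
  · intro X hX
    suffices H : ∀ i, D.st i ⊆ X by
      intro b hb
      obtain ⟨i, hi⟩ := Set.mem_iUnion.mp hb
      exact H i hi
    intro i
    induction i with
    | zero => rw [D.init]; exact hX.1
    | succ i ih =>
      have hs := D.step i
      cases hA : D.app i with
      | none => rw [hA] at hs; rw [hs]; exact ih
      | some p =>
        obtain ⟨R, π⟩ := p
        rw [hA] at hs
        obtain ⟨hR, hpb, hst⟩ := hs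
        rw [hst]
        apply Set.union_subset ih
        have hπg : ∀ v ∈ varsOfL R.pbody, (π v).Ground :=
          ground_of_set_subset (hstg i) hpb
        have hgs : GroundSubst (normSub R π) := normSub_ground hπg
        have hpe : FSubst.set (normSub R π) (listToSetF R.pbody)
            = FSubst.set π (listToSetF R.pbody) := set_congr normSub_agree
        have hhe : FSubst.set (normSub R π) (listToSetF R.head)
            = FSubst.set π (listToSetF R.head) :=
          set_congr fun v hv => normSub_agree v (hsk R hR hv)
        have hne : ∀ B ∈ R.nbodies, FSubst.set (normSub R π) (listToSetF B)
            = FSubst.set π (listToSetF B) :=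
          fun B hB => set_congr fun v hv => normSub_agree v (hsafe R hR B hB hv)
        have := hX.2 R hR (normSub R π) hgs
          (fun B hB => (hne B hB) ▸ hS i R π hA B hB)
          (hpe ▸ (hpb.trans ih))
        exact hhe ▸ this

/-! ## The fair chase construction -/

noncomputable def chaseSt (F : Set FAtom) (e : ℕ → Option (NMERule × (ℕ → FTerm))) :
    ℕ → Set FAtom
  | 0 => F
  | n + 1 =>
    match e n with
    | some (R, σ) =>
      if FSubst.set σ (listToSetF R.pbody) ⊆ chaseSt F e n then
        chaseSt F e n ∪ FSubst.set σ (listToSetF R.head)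
      else chaseSt F e n
    | none => chaseSt F e n

noncomputable def chaseApp (F : Set FAtom) (e : ℕ → Option (NMERule × (ℕ → FTerm)))
    (n : ℕ) : Option (NMERule × (ℕ → FTerm)) :=
  match e n with
  | some (R, σ) =>
    if FSubst.set σ (listToSetF R.pbody) ⊆ chaseSt F e n then some (R, σ) else none
  | none => none

noncomputable def chaseDeriv (𝓡 : Set NMERule) (F : Set FAtom)
    (e : ℕ → Option (NMERule × (ℕ → FTerm)))
    (he : ∀ n p, e n = some p → p.1 ∈ 𝓡) : SkDeriv 𝓡 F where
  st := chaseSt F e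
  app := chaseApp F e
  init := rfl
  step := by
    intro i
    cases hA : e i with
    | none =>
      simp only [chaseApp, hA]
      simp [chaseSt, hA]
    | some p =>
      obtain ⟨R, σ⟩ := p
      by_cases hsub : FSubst.set σ (listToSetF R.pbody) ⊆ chaseSt F e i
      · simp only [chaseApp, hA, if_pos hsub]
        exact ⟨he i _ hA, hsub, by simp [chaseSt, hA, if_pos hsub]⟩
      · simp only [chaseApp, hA, if_neg hsub]
        simp [chaseSt, hA, if_neg hsub]

theorem chaseApp_eq_some {F e n p} (h : chaseApp F e n = some p) :
    e n = some p ∧ FSubst.set p.2 (listToSetF p.1.pbody) ⊆ chaseSt F e n := by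
  cases hA : e n with
  | none => simp [chaseApp, hA] at h
  | some q =>
    obtain ⟨R, σ⟩ := q
    by_cases hsub : FSubst.set σ (listToSetF R.pbody) ⊆ chaseSt F e n
    · simp only [chaseApp, hA, if_pos hsub, Option.some_inj] at h
      subst h; exact ⟨rfl, hsub⟩
    · simp [chaseApp, hA, if_neg hsub] at h

/-! ## Direction 2: stable implies skolem-stable -/

theorem skstable_of_stable {𝓡 : Set NMERule} {F M : Set FAtom}
    (hsk : ∀ R ∈ 𝓡, R.Skolemized) (hsafe : ∀ R ∈ 𝓡, R.Safe)
    (h : IsStableModel 𝓡 F M) : IsSkolemStable 𝓡 F M := by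
  classical
  obtain ⟨hMg, hMC, hMmin⟩ := h
  -- the set of relevant normalized ground applications
  set P : Set (NMERule × (ℕ → FTerm)) :=
    {p | p.1 ∈ 𝓡 ∧ GroundSubst p.2 ∧ (∀ v, v ∉ p.1.vlist → p.2 v = .const 0) ∧
      ∀ B ∈ p.1.nbodies, ¬ (FSubst.set p.2 (listToSetF B) ⊆ M)} with hPdef
  -- P is countable
  have hinj : Set.InjOn (fun p : NMERule × (ℕ → FTerm) => (p.1, p.1.vlist.map p.2)) P := by
    rintro ⟨R, σ⟩ hp ⟨R', σ'⟩ hq hpq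
    simp only [Prod.mk.injEq] at hpq
    obtain ⟨rfl, hmap⟩ := hpq
    have hpt := List.map_inj_left.mp hmap
    suffices hσ : σ = σ' by rw [hσ]
    funext v
    by_cases hv : v ∈ R.vlist
    · exact hpt v hv
    · exact (hp.2.2.1 v hv).trans (hq.2.2.1 v hv).symm
  have hPc : P.Countable := by
    have : Countable ↥P :=
      Function.Injective.countable
        (f := fun p : ↥P => (p.1.1, p.1.1.vlist.map p.1.2))
        (fun p q hpq => Subtype.ext (hinj p.2 q.2 hpq))
    exact Set.countable_coe_iff.mpr this
  -- an enumeration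
  obtain ⟨f, hf⟩ := ((hPc.image some).insert none).exists_eq_range
    ⟨none, Set.mem_insert _ _⟩
  have hfP : ∀ n p, f n = some p → p ∈ P := by
    intro n p hn
    have hQ : f n ∈ insert none (some '' P) := hf ▸ Set.mem_range_self n
    rw [hn] at hQ
    rcases hQ with h0 | ⟨q, hq, hq2⟩
    · simp at h0
    · rwa [← Option.some_inj.mp hq2]
  have hfsur : ∀ p ∈ P, ∃ n, f n = some p := by
    intro p hp
    have : some p ∈ insert none (some '' P) := Set.mem_insert_of_mem _ ⟨p, hp, rfl⟩
    rw [hf] at this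
    obtain ⟨n, hn⟩ := this
    exact ⟨n, hn⟩
  -- the fair schedule
  set e : ℕ → Option (NMERule × (ℕ → FTerm)) := fun n => f (Nat.unpair n).1 with hedef
  have he : ∀ n p, e n = some p → p ∈ P := fun n p hn => hfP _ p hn
  set D : SkDeriv 𝓡 F := chaseDeriv 𝓡 F e (fun n p hn => (he n p hn).1) with hDdef
  have hstD : ∀ n, D.st n = chaseSt F e n := fun n => rfl
  -- every level is contained in M
  have hstM : ∀ n, chaseSt F e n ⊆ M := by
    intro n
    induction n with
    | zero => exact hMC.1
    | succ n ih =>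
      show chaseSt F e (n + 1) ⊆ M
      rw [chaseSt]
      cases hA : e n with
      | none => exact ih
      | some p =>
        obtain ⟨R, σ⟩ := p
        obtain ⟨hR, hgs, hnorm, hneg⟩ := he n _ hA
        show (if FSubst.set σ (listToSetF R.pbody) ⊆ chaseSt F e n then
            chaseSt F e n ∪ FSubst.set σ (listToSetF R.head) else chaseSt F e n) ⊆ M
        by_cases hsub : FSubst.set σ (listToSetF R.pbody) ⊆ chaseSt F e n
        · rw [if_pos hsub]
          exact Set.union_subset ih (hMC.2 R hR σ hgs hneg (hsub.trans ih))
        · rw [if_neg hsub]; exact ih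
  have hprodM : D.produced ⊆ M := by
    intro b hb
    obtain ⟨i, hi⟩ := Set.mem_iUnion.mp hb
    exact hstM i hi
  -- every member of P whose body is produced gets applied
  have happ : ∀ p ∈ P, FSubst.set p.2 (listToSetF p.1.pbody) ⊆ D.produced →
      FSubst.set p.2 (listToSetF p.1.head) ⊆ D.produced := by
    rintro ⟨R, σ⟩ hp hpb
    obtain ⟨i, hi⟩ := exists_st_of_subset D σ R.pbody hpb
    obtain ⟨m, hm⟩ := hfsur _ hp
    have hen : e (Nat.pair m i) = some (R, σ) := by
      rw [hedef]; simp only [Nat.unpair_pair]; exact hm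
    have hsub : FSubst.set σ (listToSetF R.pbody) ⊆ chaseSt F e (Nat.pair m i) :=
      hi.trans (D.st_mono i (Nat.pair m i) (Nat.right_le_pair m i))
    have hstep : chaseSt F e (Nat.pair m i + 1)
        = chaseSt F e (Nat.pair m i) ∪ FSubst.set σ (listToSetF R.head) := by
      rw [chaseSt, hen]
      exact if_pos hsub
    intro b hb
    have hmem : b ∈ chaseSt F e (Nat.pair m i + 1) := by
      rw [hstep]; exact Set.mem_union_right _ hb
    exact Set.mem_iUnion.mpr ⟨Nat.pair m i + 1, hmem⟩
  -- the produced set is reduct-closed, hence contains M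
  have hMprod : M ⊆ D.produced := by
    refine hMmin D.produced ⟨?_, ?_⟩
    · exact fun a ha => D.st_subset_produced 0 (show a ∈ D.st 0 from D.init.symm ▸ ha)
    · intro R hR σ hgs hneg hpb
      have hmem : (R, normSub R σ) ∈ P := by
        refine ⟨hR, normSub_ground fun v _ => hgs v, fun v hv => if_neg hv, ?_⟩
        intro B hB hBs
        exact hneg B hB
          ((set_congr fun v hv => normSub_agree v (hsafe R hR B hB hv)).symm ▸ hBs)
      have hpe : FSubst.set (normSub R σ) (listToSetF R.pbody)
          = FSubst.set σ (listToSetF R.pbody) := set_congr normSub_agree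
      have hhe : FSubst.set (normSub R σ) (listToSetF R.head)
          = FSubst.set σ (listToSetF R.head) :=
        set_congr fun v hv => normSub_agree v (hsk R hR hv)
      have := happ _ hmem (by rw [hpe]; exact hpb)
      rwa [hhe] at this
  have hprod : D.produced = M := Set.Subset.antisymm hprodM hMprod
  refine ⟨D, ?_, ?_, hprod⟩
  · -- soundness
    intro i R π hA B hB
    obtain ⟨hen, _⟩ := chaseApp_eq_some hA
    have hp := he i _ hen
    rw [hprod]
    exact hp.2.2.2 B hB
  · -- completeness
    intro R hR π hpb
    by_cases hb : ∃ B ∈ R.nbodies, FSubst.set π (listToSetF B) ⊆ D.produced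
    · exact Or.inl hb
    · push_neg at hb
      right
      have hπg : ∀ v ∈ varsOfL R.pbody, (π v).Ground :=
        ground_of_set_subset (fun b hbb => hMg b (hprodM hbb)) hpb
      have hmem : (R, normSub R π) ∈ P := by
        refine ⟨hR, normSub_ground hπg, fun v hv => if_neg hv, ?_⟩
        intro B hB hBs
        refine hb B hB ?_
        rw [hprod]
        rwa [(set_congr fun v hv => normSub_agree v (hsafe R hR B hB hv) :
          FSubst.set (normSub R π) (listToSetF B) = FSubst.set π (listToSetF B))] at hBs
      have hpe : FSubst.set (normSub R π) (listToSetF R.pbody)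
          = FSubst.set π (listToSetF R.pbody) := set_congr normSub_agree
      have hhe : FSubst.set (normSub R π) (listToSetF R.head)
          = FSubst.set π (listToSetF R.head) :=
        set_congr fun v hv => normSub_agree v (hsk R hR hv)
      have := happ _ hmem (by rw [hpe]; exact hpb)
      rwa [hhe] at this

/-- If `{F} ∪ 𝓡` is a skolemized set of nonmonotonic existential rules
(`F`, viewed as a rule with empty body, being ground), then the skolem-stable sets of
`(F,𝓡)` are in bijection with the stable models of the corresponding logic program. -/
theorem skolem_stable_sets_biject_stable_models (𝓡 : Set NMERule) (F : Set FAtom)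
    (hsk : ∀ R ∈ 𝓡, R.Skolemized) (hsafe : ∀ R ∈ 𝓡, R.Safe)
    (hFg : ∀ a ∈ F, a.Ground) (hF : F.Finite) :
    Nonempty ({A : Set FAtom // IsSkolemStable 𝓡 F A} ≃
              {M : Set FAtom // IsStableModel 𝓡 F M}) := by
  refine ⟨Equiv.subtypeEquivRight fun A => ?_⟩
  exact ⟨stable_of_skstable hsk hsafe hFg, skstable_of_stable hsk hsafe⟩
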